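/- For every N ≥ 2 and every φ ∈ ℝ with e^{iφ} ≠ 1, the elementary N-qubit LME state with phase φ is SLOCC-equivalent to the N-qubit GHZ state |0⟩^{⊗N} + |1⟩^{⊗N}. -/

import Mathlib

/-!
The elementary LME state is a sum of two product states, `|+⟩^{⊗N} + (e^{iφ} - 1) |1⟩^{⊗N}`
with `|+⟩ = |0⟩ + |1⟩`. The lower triangular local operator `[[1, 0], [-λ, λ]]` sends `|+⟩` to
`|0⟩` and `|1⟩` to `λ |1⟩`, so choosing weights `λ_k` with `∏ λ_k = (e^{iφ} - 1)⁻¹` turns the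
state into `|0⟩^{⊗N} + |1⟩^{⊗N}`. The weights exist because `N ≥ 1` and `e^{iφ} ≠ 1`.
-/

/-- The `N`-qubit GHZ state `|0…0⟩ + |1…1⟩`. -/
noncomputable def GHZ (N : ℕ) : (Fin N → Fin 2) → ℂ :=
  fun f => if (∀ k, f k = 0) ∨ (∀ k, f k = 1) then 1 else 0

/-- The elementary `N`-qubit LME state with phase `φ`: coefficient `e^{iφ}` on `|1…1⟩`
and `1` on every other computational basis vector. -/
noncomputable def elementaryLME (N : ℕ) (φ : ℝ) : (Fin N → Fin 2) → ℂ :=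
  fun f => if ∀ k, f k = 1 then Complex.exp (φ * Complex.I) else 1

open Finset Matrix

section MultipartiteStates

variable {ι n R : Type*} [Fintype ι] [CommSemiring R]

def productState (v : ι → n → R) : (ι → n) → R :=
  fun f => ∏ k, v k (f k)

theorem productState_smul (c : ι → R) (v : n → R) :
    productState (fun k => c k • v) = (∏ k, c k) • productState fun _ : ι => v := by
  ext f
  simp only [productState, Pi.smul_apply, smul_eq_mul, prod_mul_distrib]

theorem productState_single_one [DecidableEq n] (i : n) (f : ι → n) :
    productState (fun _ : ι => Pi.single i (1 : R)) f = if ∀ k, f k = i then 1 else 0 := by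
  simp only [productState, Pi.single_apply, Fintype.prod_boole]

variable [DecidableEq ι] [Fintype n]

def localOp (A : ι → Matrix n n R) (ψ : (ι → n) → R) : (ι → n) → R :=
  fun f => ∑ g, (∏ k, A k (f k) (g k)) * ψ g

theorem localOp_add (A : ι → Matrix n n R) (ψ χ : (ι → n) → R) :
    localOp A (ψ + χ) = localOp A ψ + localOp A χ := by
  ext f
  simp only [localOp, Pi.add_apply, mul_add, sum_add_distrib]

theorem localOp_smul (A : ι → Matrix n n R) (c : R) (ψ : (ι → n) → R) :
    localOp A (c • ψ) = c • localOp A ψ := by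
  ext f
  simp only [localOp, Pi.smul_apply, smul_eq_mul, mul_sum]
  exact sum_congr rfl fun g _ => mul_left_comm _ _ _

theorem localOp_productState (A : ι → Matrix n n R) (v : ι → n → R) :
    localOp A (productState v) = productState fun k => A k *ᵥ v k := by
  ext f
  simp only [localOp, productState, mulVec, dotProduct, Fintype.prod_sum, prod_mul_distrib]

end MultipartiteStates

theorem GHZ_eq_productState_add (N : ℕ) (hN : N ≠ 0) :
    GHZ N = productState (fun _ : Fin N => Pi.single 0 1) +
      productState fun _ : Fin N => Pi.single 1 1 := by
  ext f
  simp only [GHZ, Pi.add_apply, productState_single_one]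
  have not_both : ¬((∀ k, f k = 0) ∧ ∀ k, f k = 1) := fun ⟨h0, h1⟩ =>
    zero_ne_one ((h0 ⟨0, Nat.pos_of_ne_zero hN⟩).symm.trans (h1 _))
  split_ifs <;> simp_all

theorem elementaryLME_eq_productState_add (N : ℕ) (φ : ℝ) :
    elementaryLME N φ = productState (fun _ : Fin N => 1) +
      (Complex.exp (φ * Complex.I) - 1) • productState fun _ : Fin N => Pi.single 1 1 := by
  ext f
  simp only [elementaryLME, Pi.add_apply, Pi.smul_apply, productState_single_one, smul_eq_mul]
  simp only [productState, Pi.one_apply, prod_const_one]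
  split_ifs <;> ring

section TwoByTwo

variable {R : Type*} [CommRing R]

def ghzFactor (l : R) : Matrix (Fin 2) (Fin 2) R := !![1, 0; -l, l]

theorem det_ghzFactor (l : R) : (ghzFactor l).det = l := by
  simp [ghzFactor, det_fin_two_of]

theorem ghzFactor_mulVec_one (l : R) : ghzFactor l *ᵥ 1 = Pi.single 0 1 := by
  ext i
  fin_cases i <;> simp [ghzFactor, mulVec, dotProduct, Fin.sum_univ_two]

theorem ghzFactor_mulVec_single_one (l : R) :
    ghzFactor l *ᵥ Pi.single 1 1 = l • Pi.single 1 1 := by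
  ext i
  fin_cases i <;> simp [ghzFactor, mulVec, dotProduct, Fin.sum_univ_two]

end TwoByTwo

/-- For `N ≥ 2` and `e^{iφ} ≠ 1`, the elementary `N`-qubit LME state is
SLOCC-equivalent to the `N`-qubit GHZ state. -/
theorem elementaryLME_slocc_equiv_ghz (N : ℕ) (hN : 2 ≤ N) (φ : ℝ)
    (hφ : Complex.exp (φ * Complex.I) ≠ 1) :
    ∃ A : Fin N → Matrix (Fin 2) (Fin 2) ℂ,
      (∀ k, IsUnit (A k)) ∧
      ∀ f : Fin N → Fin 2,
        GHZ N f = ∑ g : Fin N → Fin 2, (∏ k, A k (f k) (g k)) * elementaryLME N φ g := by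
  set c := Complex.exp (φ * Complex.I) - 1
  have hc : c ≠ 0 := sub_ne_zero.mpr hφ
  let k₀ : Fin N := ⟨0, by omega⟩
  let l : Fin N → ℂ := Pi.mulSingle k₀ c⁻¹
  have hl : ∀ k, l k ≠ 0 := fun k => by
    by_cases hk : k = k₀ <;> simp [l, hk, hc]
  have hA : GHZ N = localOp (fun k => ghzFactor (l k)) (elementaryLME N φ) := by
    rw [elementaryLME_eq_productState_add, localOp_add, localOp_smul, localOp_productState,
      localOp_productState]
    simp only [ghzFactor_mulVec_one, ghzFactor_mulVec_single_one, productState_smul]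
    rw [prod_pi_mulSingle', if_pos (mem_univ _), smul_smul, mul_inv_cancel₀ hc, one_smul,
      GHZ_eq_productState_add N (by omega)]
  refine ⟨fun k => ghzFactor (l k), fun k => ?_, fun f => congrFun hA f⟩
  rw [isUnit_iff_isUnit_det, det_ghzFactor]
  exact (hl k).isUnit
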